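/- arXiv:1105.0867 — 2 statements merged into one kernel-verified Lean document; each statement's English description precedes it below -/
import Mathlib

section
/- Let M and N be von Neumann algebras (or more generally unital C*-algebras) and S : M → N a unital completely positive bijection whose inverse is also completely positive. Then S is a Jordan *-homomorphism, i.e., S(x*) = S(x)* and S(xy + yx) = S(x)S(y) + S(y)S(x) for all x, y. -/
/-!
Applying 2-positivity to `!![1, a; star a, star a * a]` gives `S (star a) = star (S a)` and the
Kadison–Schwarz inequality `star (S a) * S a ≤ S (star a * a)`. The same inequality for `S⁻¹` at
`S a`, pushed forward by the positive (hence monotone) map `S`, gives the reverse inequality, so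
`S (star a * a) = star (S a) * S a` for every `a`. Polarizing this identity, once with `y` and once
with `I • y`, shows that `S` is multiplicative, which is more than the Jordan identity.
-/

/-- A map between (non-unital) star rings is *completely positive* if, for every `k`, the
entrywise application to `k × k` matrices sends positive matrices (i.e. those of the form
`star b * b` in the matrix C*-algebra) to positive matrices. -/
def IsCompletelyPositive {M N : Type*} [NonUnitalRing M] [StarRing M]
    [NonUnitalRing N] [StarRing N] (S : M → N) : Prop :=
  ∀ (k : ℕ) (m : Matrix (Fin k) (Fin k) M),
    (∃ b : Matrix (Fin k) (Fin k) M, m = star b * b) →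
    ∃ c : Matrix (Fin k) (Fin k) N, m.map S = star c * c

open Finset

theorem sum_star_mul_self_sub_star_mul_self {R ι : Type*} [Ring R] [StarRing R] [Fintype ι]
    (u v : ι → R) (hu : ∑ i, star (u i) * u i = 1) :
    ∑ i, star (v i) * v i - star (∑ i, star (u i) * v i) * ∑ i, star (u i) * v i =
      ∑ i, star (v i - u i * ∑ j, star (u j) * v j) * (v i - u i * ∑ j, star (u j) * v j) := by
  set s := ∑ j, star (u j) * v j with hs_def
  have hs : star s = ∑ i, star (v i) * u i := by simp [s, star_sum]
  have expand i : star (v i - u i * s) * (v i - u i * s) = star (v i) * v i -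
      star (v i) * u i * s - star s * (star (u i) * v i) + star s * (star (u i) * u i) * s := by
    simp only [star_sub, star_mul]
    noncomm_ring
  simp only [expand, sum_add_distrib, sum_sub_distrib, ← sum_mul, ← mul_sum, hu, ← hs, ← hs_def]
  noncomm_ring

theorem LinearMap.map_mul_of_map_star_mul_self {M N : Type*} [Ring M] [StarRing M] [Algebra ℂ M]
    [StarModule ℂ M] [Ring N] [StarRing N] [Algebra ℂ N] [StarModule ℂ N] (f : M →ₗ[ℂ] N)
    (hstar : ∀ a, f (star a) = star (f a)) (hf : ∀ a, f (star a * a) = star (f a) * f a)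
    (x y : M) : f (x * y) = f x * f y := by
  have polarize a b : f (star a * b + star b * a) = star (f a) * f b + star (f b) * f a := by
    have e := hf (a + b)
    simp only [star_add, add_mul, mul_add, map_add, hf] at e
    rw [map_add]
    linear_combination (norm := abel) e
  have h₁ := polarize (star x) y
  have h₂ := polarize (star x) (Complex.I • y)
  simp only [star_star, hstar, map_add, map_smul, star_smul, smul_mul_assoc, mul_smul_comm,
    Complex.star_def, Complex.conj_I] at h₁ h₂
  linear_combination (norm := match_scalars <;> simp [Complex.ext_iff] <;> norm_num)
    (1 / 2 : ℂ) • h₁ - (Complex.I / 2) • h₂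

namespace IsCompletelyPositive

variable {M N : Type*}

theorem exists_map_star_mul_self_eq [NonUnitalRing M] [StarRing M] [NonUnitalRing N] [StarRing N]
    {f : M → N} (hf : IsCompletelyPositive f) (r : M) : ∃ c : N, f (star r * r) = star c * c := by
  obtain ⟨c, hc⟩ := hf 1 (Matrix.of fun _ _ => star r * r)
    ⟨Matrix.of fun _ _ => r, by ext; simp [Matrix.mul_apply]⟩
  exact ⟨c 0 0, by simpa [Matrix.mul_apply] using congr_fun₂ hc 0 0⟩

theorem map_nonneg [NonUnitalRing M] [StarRing M] [PartialOrder M] [StarOrderedRing M]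
    [NonUnitalRing N] [StarRing N] [PartialOrder N] [StarOrderedRing N]
    {f : M →+ N} (hf : IsCompletelyPositive f) {x : M} (hx : 0 ≤ x) : 0 ≤ f x := by
  rw [StarOrderedRing.nonneg_iff] at hx
  induction hx using AddSubmonoid.closure_induction with
  | mem _ h =>
    obtain ⟨r, rfl⟩ := h
    obtain ⟨c, hc⟩ := hf.exists_map_star_mul_self_eq r
    exact hc ▸ star_mul_self_nonneg c
  | zero => simp
  | add _ _ _ _ h₁ h₂ => simpa using add_nonneg h₁ h₂

theorem monotone [NonUnitalRing M] [StarRing M] [PartialOrder M] [StarOrderedRing M]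
    [NonUnitalRing N] [StarRing N] [PartialOrder N] [StarOrderedRing N]
    {f : M →+ N} (hf : IsCompletelyPositive f) : Monotone f := fun x y hxy => by
  simpa using hf.map_nonneg (sub_nonneg.mpr hxy)

/-- `!![1, a; star a, star a * a] = star b * b` with `b = !![1, a; 0, 0]`. -/
theorem exists_gram [Ring M] [StarRing M] [NonUnitalRing N] [StarRing N]
    {f : M → N} (hf : IsCompletelyPositive f) (a : M) :
    ∃ u v : Fin 2 → N, f 1 = ∑ i, star (u i) * u i ∧ f a = ∑ i, star (u i) * v i ∧
      f (star a) = ∑ i, star (v i) * u i ∧ f (star a * a) = ∑ i, star (v i) * v i := by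
  obtain ⟨c, hc⟩ := hf 2 !![1, a; star a, star a * a] ⟨!![1, a; 0, 0], by
    ext i j; fin_cases i <;> fin_cases j <;> simp [Matrix.mul_apply, Fin.sum_univ_two]⟩
  have entry i j := congr_fun₂ hc i j
  simp only [Matrix.map_apply, Matrix.mul_apply, Matrix.star_apply] at entry
  exact ⟨fun i => c i 0, fun i => c i 1, by simpa using entry 0 0, by simpa using entry 0 1,
    by simpa using entry 1 0, by simpa using entry 1 1⟩

theorem map_star [Ring M] [StarRing M] [NonUnitalRing N] [StarRing N]
    {f : M → N} (hf : IsCompletelyPositive f) (a : M) : f (star a) = star (f a) := by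
  obtain ⟨u, v, -, ha, hsa, -⟩ := hf.exists_gram a
  simp [ha, hsa]

theorem star_map_mul_map_le [Ring M] [StarRing M] [Ring N] [StarRing N] [PartialOrder N]
    [StarOrderedRing N] {f : M → N} (hf : IsCompletelyPositive f) (hf1 : f 1 = 1) (a : M) :
    star (f a) * f a ≤ f (star a * a) := by
  obtain ⟨u, v, h1, ha, -, haa⟩ := hf.exists_gram a
  rw [← sub_nonneg, haa, ha, sum_star_mul_self_sub_star_mul_self u v (h1 ▸ hf1)]
  exact sum_nonneg fun i _ => star_mul_self_nonneg _

theorem map_star_mul_self_of_symm [Ring M] [StarRing M] [PartialOrder M] [StarOrderedRing M]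
    [Ring N] [StarRing N] [PartialOrder N] [StarOrderedRing N] {e : M ≃+ N} (he1 : e 1 = 1)
    (he : IsCompletelyPositive e) (he_symm : IsCompletelyPositive e.symm) (a : M) :
    e (star a * a) = star (e a) * e a := by
  have hsymm1 : e.symm 1 = 1 := by rw [← he1, e.symm_apply_apply]
  have h := he.monotone (f := e.toAddMonoidHom) (he_symm.star_map_mul_map_le hsymm1 (e a))
  simp only [AddEquiv.coe_toAddMonoidHom, e.symm_apply_apply, e.apply_symm_apply] at h
  exact le_antisymm h (he.star_map_mul_map_le he1 a)

end IsCompletelyPositive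

/-- Let `M` and `N` be unital C*-algebras and `S : M → N` a unital (linear)
completely positive bijection whose inverse is also completely positive.  Then `S` is a
Jordan *-homomorphism: `S (x*) = (S x)*` and `S (xy + yx) = S x S y + S y S x`. -/
theorem jordan_star_hom_of_cp_order_iso
    {M N : Type*} [CStarAlgebra M] [CStarAlgebra N]
    (S : M ≃ₗ[ℂ] N) (hS1 : S 1 = 1)
    (hcp : IsCompletelyPositive ⇑S) (hcpinv : IsCompletelyPositive ⇑S.symm) :
    (∀ x : M, S (star x) = star (S x)) ∧
    (∀ x y : M, S (x * y + y * x) = S x * S y + S y * S x) := by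
  let := CStarAlgebra.spectralOrder M
  let := CStarAlgebra.spectralOrder N
  have := CStarAlgebra.spectralOrderedRing M
  have := CStarAlgebra.spectralOrderedRing N
  have hstar : ∀ x, S (star x) = star (S x) := hcp.map_star
  have hmul (x y : M) : S (x * y) = S x * S y :=
    S.toLinearMap.map_mul_of_map_star_mul_self hstar
      (IsCompletelyPositive.map_star_mul_self_of_symm (e := S.toAddEquiv) hS1 hcp hcpinv) x y
  exact ⟨hstar, fun x y => by rw [map_add, hmul, hmul]⟩
end

section
/- In a unital C*-algebra A, if aa* ≤ a*a holds for every element a ∈ A, then A is commutative. -/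
/-- In a unital C*-algebra `A`, if `a a* ≤ a* a` holds for every element `a`,
then `A` is commutative. -/
theorem commutative_of_aastar_le_astara
    {A : Type*} [CStarAlgebra A] [PartialOrder A] [StarOrderedRing A]
    (h : ∀ a : A, a * star a ≤ star a * a) :
    ∀ a b : A, a * b = b * a := by
  have hn : ∀ a : A, a * star a = star a * a := fun a =>
    le_antisymm (h a) (by simpa using h (star a))
  have key : ∀ x y : A, IsSelfAdjoint x → IsSelfAdjoint y → Commute x y := by
    intro x y hx hy
    have hu := hn (x + Complex.I • y)
    have hstar : star (x + Complex.I • y) = x + (-Complex.I) • y := by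
      simp [star_smul, hx.star_eq, hy.star_eq, Complex.conj_I, neg_smul]
    rw [hstar] at hu
    simp only [mul_add, add_mul, smul_mul_assoc, mul_smul_comm, smul_smul] at hu
    have h2 : (2 * Complex.I) • (x * y) = (2 * Complex.I) • (y * x) := by
      linear_combination (norm := module) -hu
    have hne : (2 * Complex.I) ≠ 0 := by
      simp [Complex.I_ne_zero]
    have : x * y = y * x := by
      calc x * y = (2 * Complex.I)⁻¹ • ((2 * Complex.I) • (x * y)) :=
            (inv_smul_smul₀ hne _).symm
        _ = (2 * Complex.I)⁻¹ • ((2 * Complex.I) • (y * x)) := by rw [h2]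
        _ = y * x := inv_smul_smul₀ hne _
    exact this
  intro a b
  have hc : Commute a b := by
    rw [← realPart_add_I_smul_imaginaryPart a, ← realPart_add_I_smul_imaginaryPart b]
    have h1 := key _ _ (realPart a).prop (realPart b).prop
    have h2 := key _ _ (realPart a).prop (imaginaryPart b).prop
    have h3 := key _ _ (imaginaryPart a).prop (realPart b).prop
    have h4 := key _ _ (imaginaryPart a).prop (imaginaryPart b).prop
    exact (h1.add_right (h2.smul_right _)).add_left
      (((h3.smul_left _).add_right ((h4.smul_left _).smul_right _)))
  exact hc
end
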